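/- arXiv:2508.18618 — 3 statements merged into one kernel-verified Lean document; each statement's English description precedes it below -/
import Mathlib

section
/- Let p, q be positive integers, L(p,q) the abelian group with generators x₁, x₂ and relation p·x₁ = q·x₂, and c = p·x₁. For an element x ∈ L(p,q) written in normal form x = l₁·x₁ + l₂·x₂ + l·c with 0 ≤ l₁ < p and 0 ≤ l₂ < q, the following are equivalent: (i) there exist nonnegative integers a, b with x = a·x₁ + b·x₂ in L(p,q); (ii) l ≥ 0. -/
/-- The abelian group `L(p,q)` with generators `x₁, x₂` and relation `p·x₁ = q·x₂`,
realized as the quotient of `ℤ²` by the subgroup generated by `(p, -q)`. -/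
abbrev Lgrp (p q : ℕ) : Type := (ℤ × ℤ) ⧸ AddSubgroup.closure {((p : ℤ), -(q : ℤ))}

/-- The generator `x₁` of `L(p,q)`. -/
def Lx₁ (p q : ℕ) : Lgrp p q := QuotientAddGroup.mk (1, 0)

/-- The generator `x₂` of `L(p,q)`. -/
def Lx₂ (p q : ℕ) : Lgrp p q := QuotientAddGroup.mk (0, 1)

lemma Lgrp_smul_mk (p q : ℕ) (n : ℤ) (a : ℤ × ℤ) :
    n • (QuotientAddGroup.mk a : Lgrp p q) = QuotientAddGroup.mk (n • a) :=
  (map_zsmul (QuotientAddGroup.mk' _) n a).symm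

lemma Lgrp_mk_eq (p q : ℕ) (a b : ℤ × ℤ) :
    (QuotientAddGroup.mk a : Lgrp p q) = QuotientAddGroup.mk b ↔
      ∃ k : ℤ, b - a = k • ((p : ℤ), -(q : ℤ)) := by
  rw [QuotientAddGroup.eq, AddSubgroup.mem_closure_singleton]
  constructor
  · rintro ⟨k, hk⟩; exact ⟨k, by rw [hk]; abel⟩
  · rintro ⟨k, hk⟩; exact ⟨k, by rw [← hk]; abel⟩

/-- for `x = l₁·x₁ + l₂·x₂ + l·c` in normal form (`0 ≤ l₁ < p`,
`0 ≤ l₂ < q`, `c = p·x₁`), `x` lies in the positive cone (i.e. `x = a·x₁ + b·x₂`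
for some nonnegative integers `a, b`) iff `l ≥ 0`. -/
theorem Lgrp_positive_cone_iff (p q : ℕ) (hp : 0 < p) (hq : 0 < q)
    (l₁ l₂ l : ℤ) (h₁ : 0 ≤ l₁) (h₁' : l₁ < (p : ℤ)) (h₂ : 0 ≤ l₂) (h₂' : l₂ < (q : ℤ))
    (x : Lgrp p q)
    (hx : x = l₁ • Lx₁ p q + l₂ • Lx₂ p q + l • ((p : ℤ) • Lx₁ p q)) :
    (∃ a b : ℕ, x = (a : ℤ) • Lx₁ p q + (b : ℤ) • Lx₂ p q) ↔ 0 ≤ l := by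
  have hq' : (0:ℤ) < q := by exact_mod_cast hq
  have hp' : (0:ℤ) < p := by exact_mod_cast hp
  have hxmk : x = (QuotientAddGroup.mk (l₁ + l * p, l₂) : Lgrp p q) := by
    rw [hx]
    unfold Lx₁ Lx₂
    rw [Lgrp_smul_mk, Lgrp_smul_mk, Lgrp_smul_mk, Lgrp_smul_mk,
      ← QuotientAddGroup.mk_add, ← QuotientAddGroup.mk_add]
    congr 1
    simp [Prod.ext_iff, mul_comm]
  constructor
  · rintro ⟨a, b, hab⟩
    have : (QuotientAddGroup.mk ((a:ℤ), (b:ℤ)) : Lgrp p q) =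
        QuotientAddGroup.mk (l₁ + l * p, l₂) := by
      rw [← hxmk, hab]
      unfold Lx₁ Lx₂
      rw [Lgrp_smul_mk, Lgrp_smul_mk, ← QuotientAddGroup.mk_add]
      congr 1
      simp
    rw [Lgrp_mk_eq] at this
    obtain ⟨k, hk⟩ := this
    rw [Prod.ext_iff] at hk
    obtain ⟨hk1, hk2⟩ := hk
    simp only [Prod.fst_sub, Prod.snd_sub, Prod.smul_fst, Prod.smul_snd, smul_eq_mul] at hk1 hk2
    have hk0 : 0 ≤ k := by nlinarith [Int.natCast_nonneg b]
    have hlk : 0 ≤ l - k := by nlinarith [Int.natCast_nonneg a]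
    linarith
  · intro hl
    refine ⟨(l₁ + l * p).toNat, l₂.toNat, ?_⟩
    have ha : ((l₁ + l * p).toNat : ℤ) = l₁ + l * p :=
      Int.toNat_of_nonneg (by positivity)
    have hb : (l₂.toNat : ℤ) = l₂ := Int.toNat_of_nonneg h₂
    rw [hxmk, ha, hb]
    unfold Lx₁ Lx₂
    rw [Lgrp_smul_mk, Lgrp_smul_mk, ← QuotientAddGroup.mk_add]
    congr 1
    simp
end

section
/- Let p, q be positive integers, L(p,q) the abelian group with generators x₁, x₂ and relation p·x₁ = q·x₂, and c = p·x₁. For x ∈ L(p,q) in normal form x = l₁·x₁ + l₂·x₂ + l·c with 0 ≤ l₁ < p, 0 ≤ l₂ < q and l an integer, the number of pairs (a, b) of nonnegative integers such that a·x₁ + b·x₂ = x in L(p,q) equals l + 1 if l ≥ 0, and there are no such pairs if l < 0. -/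
lemma Lgrp_smul_mk_s4 (p q : ℕ) (a b : ℤ) :
    a • Lx₁ p q + b • Lx₂ p q = QuotientAddGroup.mk (a, b) := by
  rw [Lx₁, Lx₂, ← QuotientAddGroup.mk_zsmul, ← QuotientAddGroup.mk_zsmul,
    ← QuotientAddGroup.mk_add]
  congr 1
  simp [Prod.ext_iff]

lemma Lgrp_mk_eq_iff (p q : ℕ) (u v : ℤ × ℤ) :
    (QuotientAddGroup.mk u : Lgrp p q) = QuotientAddGroup.mk v ↔
      ∃ k : ℤ, k • ((p:ℤ), -(q:ℤ)) = v - u := by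
  rw [QuotientAddGroup.eq, neg_add_eq_sub, AddSubgroup.mem_closure_singleton]

/-- for `x = l₁·x₁ + l₂·x₂ + l·c` in normal form, the number of pairs
`(a,b)` of nonnegative integers with `a·x₁ + b·x₂ = x` equals `l + 1` when `l ≥ 0`,
and there are no such pairs when `l < 0`. -/
theorem Lgrp_count_nonneg_presentations (p q : ℕ) (hp : 0 < p) (hq : 0 < q)
    (l₁ l₂ l : ℤ) (h₁ : 0 ≤ l₁) (h₁' : l₁ < (p : ℤ)) (h₂ : 0 ≤ l₂) (h₂' : l₂ < (q : ℤ))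
    (x : Lgrp p q)
    (hx : x = l₁ • Lx₁ p q + l₂ • Lx₂ p q + l • ((p : ℤ) • Lx₁ p q)) :
    (0 ≤ l →
      {ab : ℕ × ℕ | (ab.1 : ℤ) • Lx₁ p q + (ab.2 : ℤ) • Lx₂ p q = x}.ncard = l.toNat + 1) ∧
    (l < 0 →
      {ab : ℕ × ℕ | (ab.1 : ℤ) • Lx₁ p q + (ab.2 : ℤ) • Lx₂ p q = x} = ∅) := by
  have hq0 : (0:ℤ) < q := by exact_mod_cast hq
  have hp0 : (0:ℤ) < p := by exact_mod_cast hp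
  have hxmk : x = QuotientAddGroup.mk (l₁ + l * p, l₂) := by
    rw [hx, smul_smul]
    have h : l₁ • Lx₁ p q + l₂ • Lx₂ p q + (l * p) • Lx₁ p q
        = (l₁ + l * p) • Lx₁ p q + l₂ • Lx₂ p q := by
      rw [add_zsmul]; abel
    rw [h, Lgrp_smul_mk_s4]
  -- characterize membership
  have hmem : ∀ a b : ℕ, ((a : ℤ) • Lx₁ p q + (b : ℤ) • Lx₂ p q = x) ↔
      ∃ k : ℤ, 0 ≤ k ∧ k ≤ l ∧ (a : ℤ) = l₁ + (l - k) * p ∧ (b : ℤ) = l₂ + k * q := by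
    intro a b
    rw [hxmk, Lgrp_smul_mk_s4, Lgrp_mk_eq_iff]
    constructor
    · rintro ⟨k, hk⟩
      rw [Prod.ext_iff] at hk
      simp only [Prod.smul_fst, Prod.smul_snd, smul_eq_mul, Prod.fst_sub, Prod.snd_sub] at hk
      obtain ⟨hk1, hk2⟩ := hk
      have ha : (a : ℤ) = l₁ + (l - k) * p := by ring_nf; ring_nf at hk1; linarith
      have hb : (b : ℤ) = l₂ + k * q := by linarith
      have hbnn : (0:ℤ) ≤ b := Int.ofNat_nonneg b
      have hann : (0:ℤ) ≤ a := Int.ofNat_nonneg a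
      have hk0 : 0 ≤ k := by nlinarith
      have hkl : k ≤ l := by nlinarith
      exact ⟨k, hk0, hkl, ha, hb⟩
    · rintro ⟨k, hk0, hkl, ha, hb⟩
      refine ⟨k, ?_⟩
      rw [Prod.ext_iff]
      simp only [Prod.smul_fst, Prod.smul_snd, smul_eq_mul, Prod.fst_sub, Prod.snd_sub]
      constructor
      · show k * (p:ℤ) = (l₁ + l * ↑p, l₂).1 - ((a:ℤ), (b:ℤ)).1
        simp only; rw [ha]; ring
      · show k * (-(q:ℤ)) = (l₁ + l * ↑p, l₂).2 - ((a:ℤ), (b:ℤ)).2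
        simp only; rw [hb]; ring
  set S := {ab : ℕ × ℕ | (ab.1 : ℤ) • Lx₁ p q + (ab.2 : ℤ) • Lx₂ p q = x} with hS
  have hSeq : S = (fun k : ℤ => ((l₁ + (l - k) * p).toNat, (l₂ + k * q).toNat)) '' Set.Icc 0 l := by
    ext ⟨a, b⟩
    simp only [hS, Set.mem_setOf_eq, Set.mem_image, Set.mem_Icc]
    rw [hmem a b]
    constructor
    · rintro ⟨k, hk0, hkl, ha, hb⟩
      exact ⟨k, ⟨hk0, hkl⟩, by rw [← ha, ← hb]; simp⟩
    · rintro ⟨k, ⟨hk0, hkl⟩, hk⟩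
      have hfa : (0:ℤ) ≤ l₁ + (l - k) * p := by nlinarith
      have hfb : (0:ℤ) ≤ l₂ + k * q := by nlinarith
      rw [Prod.mk.injEq] at hk
      obtain ⟨hka, hkb⟩ := hk
      refine ⟨k, hk0, hkl, ?_, ?_⟩
      · rw [← hka, Int.toNat_of_nonneg hfa]
      · rw [← hkb, Int.toNat_of_nonneg hfb]
  constructor
  · intro hl
    rw [hSeq, Set.ncard_image_of_injOn, ← Finset.coe_Icc, Set.ncard_coe_finset, Int.card_Icc]
    · omega
    · intro k hk k' hk' h
      simp only [Set.mem_Icc] at hk hk'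
      have h2 := congrArg Prod.snd h
      simp only at h2
      have hfb : (0:ℤ) ≤ l₂ + k * q := by nlinarith [hk.1]
      have hfb' : (0:ℤ) ≤ l₂ + k' * q := by nlinarith [hk'.1]
      have : l₂ + k * q = l₂ + k' * q := by
        have := congrArg (fun n : ℕ => (n : ℤ)) h2
        simpa [Int.toNat_of_nonneg hfb, Int.toNat_of_nonneg hfb'] using this
      have : k * q = k' * q := by linarith
      exact mul_right_cancel₀ (by positivity) this
  · intro hl
    rw [hSeq]
    have : Set.Icc (0:ℤ) l = ∅ := Set.Icc_eq_empty (by omega)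
    rw [this, Set.image_empty]
end

section
/- Let p and q be coprime positive integers. The number of (p,q)-Dyck paths, i.e., lattice paths from (0,0) to (p,q) all of whose points (x,y) satisfy p·y ≤ q·x, equals (1/(p+q))·(p+q choose p). -/
/-- A lattice path with `n` steps, encoded as its sequence of `n+1` points:
it starts at `(0,0)` and each point is obtained from the previous one by adding
`(1,0)` or `(0,1)`. -/
def IsLatticePath (n : ℕ) (f : Fin (n + 1) → ℤ × ℤ) : Prop :=
  f 0 = (0, 0) ∧
  ∀ i : Fin n, f i.succ = f i.castSucc + (1, 0) ∨ f i.succ = f i.castSucc + (0, 1)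

namespace DPaux

variable {n : ℕ} [NeZero n]

private lemma npos : 0 < n := Nat.pos_of_ne_zero (NeZero.ne n)

/-- reduce a natural number mod `n` into `Fin n`. -/
def idx (n : ℕ) [NeZero n] (i : ℕ) : Fin n :=
  ⟨i % n, Nat.mod_lt _ (Nat.pos_of_ne_zero (NeZero.ne n))⟩

/-- periodic extension of a step sequence. -/
def sh (s : Fin n → Bool) (i : ℕ) : Bool := s (idx n i)

lemma sh_fin (s : Fin n → Bool) (i : Fin n) : sh s i.val = s i := by
  unfold sh idx
  congr 1
  exact Fin.ext (Nat.mod_eq_of_lt i.isLt)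

lemma sh_add_n (s : Fin n → Bool) (k : ℕ) : sh s (k + n) = sh s k := by
  unfold sh idx
  congr 1
  exact Fin.ext (Nat.add_mod_right k n)

/-- number of `true` steps among the first `k` steps. -/
def cnt (s : Fin n → Bool) (k : ℕ) : ℕ :=
  ((Finset.range k).filter (fun i => sh s i = true)).card

lemma cnt_zero (s : Fin n → Bool) : cnt s 0 = 0 := by simp [cnt]

lemma cnt_succ (s : Fin n → Bool) (k : ℕ) :
    cnt s (k + 1) = cnt s k + (if sh s k then 1 else 0) := by
  unfold cnt
  rw [Finset.range_add_one, Finset.filter_insert]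
  split
  · rw [Finset.card_insert_of_notMem (by simp)]
  · simp

lemma cnt_le (s : Fin n → Bool) (k : ℕ) : cnt s k ≤ k := by
  calc cnt s k ≤ (Finset.range k).card := Finset.card_filter_le _ _
  _ = k := Finset.card_range k

lemma cnt_mono (s : Fin n → Bool) {a b : ℕ} (h : a ≤ b) : cnt s a ≤ cnt s b :=
  Finset.card_le_card (Finset.filter_subset_filter _ (Finset.range_subset_range.2 h))

lemma cnt_add_le (s : Fin n → Bool) (a m : ℕ) : cnt s (a + m) ≤ cnt s a + m := by
  induction m with
  | zero => simp
  | succ m ih =>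
    rw [← Nat.add_assoc, cnt_succ]
    split <;> omega

/-- weighted partial sum: `q·(#East) - p·(#North)` after `k` steps. -/
def S (p q : ℕ) (s : Fin n → Bool) (k : ℕ) : ℤ :=
  (q : ℤ) * (cnt s k : ℤ) - (p : ℤ) * ((k : ℤ) - (cnt s k : ℤ))

lemma S_zero (p q : ℕ) (s : Fin n → Bool) : S p q s 0 = 0 := by simp [S, cnt_zero]

lemma S_succ (p q : ℕ) (s : Fin n → Bool) (k : ℕ) :
    S p q s (k + 1) = S p q s k + (if sh s k then (q : ℤ) else -(p : ℤ)) := by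
  unfold S
  rw [cnt_succ]
  split <;> push_cast <;> ring

section pq

variable {p q : ℕ}

lemma S_n (hn : n = p + q) (s : Fin n → Bool) (hb : cnt s n = p) :
    S p q s n = 0 := by
  unfold S
  rw [hb]; subst hn; push_cast; ring

lemma S_add_n (hn : n = p + q) (s : Fin n → Bool) (hb : cnt s n = p) (k : ℕ) :
    S p q s (k + n) = S p q s k := by
  induction k with
  | zero => rw [Nat.zero_add, S_n hn s hb, S_zero]
  | succ k ih =>
    have h1 : k + 1 + n = (k + n) + 1 := by omega
    rw [h1, S_succ, S_succ, ih, sh_add_n]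

lemma S_mod (hn : n = p + q) (s : Fin n → Bool) (hb : cnt s n = p) (k : ℕ) :
    S p q s k = S p q s (k % n) := by
  have key : ∀ c m : ℕ, S p q s (m + c * n) = S p q s m := by
    intro c
    induction c with
    | zero => simp
    | succ c ih =>
      intro m
      have : m + (c + 1) * n = (m + c * n) + n := by ring
      rw [this, S_add_n hn s hb, ih]
  conv_lhs => rw [← Nat.mod_add_div' k n]
  rw [key]

/-- rotation of a step sequence by `m`. -/
def rot (m : ℕ) (s : Fin n → Bool) : Fin n → Bool := fun i => s (idx n (i.val + m))

lemma sh_rot (m : ℕ) (s : Fin n → Bool) (k : ℕ) : sh (rot m s) k = sh s (k + m) := by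
  unfold sh rot idx
  congr 1
  exact Fin.ext (Nat.mod_add_mod k n m)

lemma rot_rot (a b : ℕ) (s : Fin n → Bool) : rot a (rot b s) = rot (a + b) s := by
  funext i
  unfold rot idx
  congr 1
  apply Fin.ext
  show ((i.val + a) % n + b) % n = (i.val + (a + b)) % n
  rw [Nat.mod_add_mod, Nat.add_assoc]

lemma rot_n (s : Fin n → Bool) : rot n s = s := by
  funext i
  unfold rot idx
  congr 1
  apply Fin.ext
  show (i.val + n) % n = i.val
  rw [Nat.add_mod_right]
  exact Nat.mod_eq_of_lt i.isLt

lemma rot_mod (m : ℕ) (s : Fin n → Bool) : rot (m % n) s = rot m s := by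
  funext i
  unfold rot idx
  congr 1
  exact Fin.ext (Nat.add_mod_mod i.val m n)

lemma S_rot (m : ℕ) (s : Fin n → Bool) (k : ℕ) :
    S p q (rot m s) k = S p q s (m + k) - S p q s m := by
  induction k with
  | zero => rw [S_zero, Nat.add_zero, sub_self]
  | succ k ih =>
    have h1 : m + (k + 1) = (m + k) + 1 := rfl
    rw [S_succ, ih, h1, S_succ, sh_rot, Nat.add_comm k m]
    ring

lemma bal_rot (hn : n = p + q) {s : Fin n → Bool} (hb : cnt s n = p) (m : ℕ) :
    cnt (rot m s) n = p := by
  have h0 : S p q (rot m s) n = 0 := by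
    rw [S_rot, S_add_n hn s hb, sub_self]
  unfold S at h0
  have hC : cnt (rot m s) n ≤ n := cnt_le _ _
  have hnpos : 0 < n := npos
  have hpq0 : ((p : ℤ) + q) ≠ 0 := by
    have h1 : 0 < p + q := hn ▸ hnpos
    have h2 : (0 : ℤ) < (p : ℤ) + q := by exact_mod_cast h1
    exact h2.ne'
  have hkey : ((p : ℤ) + q) * (cnt (rot m s) n : ℤ) = ((p : ℤ) + q) * (p : ℤ) := by
    have hcast : (n : ℤ) = (p : ℤ) + q := by rw [hn]; push_cast; ring
    rw [hcast] at h0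
    linear_combination h0
  have := mul_left_cancel₀ hpq0 hkey
  exact_mod_cast this

lemma S_inj_le (hn : n = p + q) (hp : 0 < p) (hq : 0 < q) (hpq : Nat.Coprime p q)
    {s : Fin n → Bool} (hb : cnt s n = p) {a b : ℕ} (hab : a ≤ b)
    (ha : a < n) (hbn : b < n) (h : S p q s a = S p q s b) : a = b := by
  set Ca := cnt s a with hCa
  set Cb := cnt s b with hCb
  have h1 : Ca ≤ Cb := cnt_mono s hab
  have h2 : Cb ≤ p := by
    have := cnt_mono s (Nat.le_of_lt hbn)
    omega
  have h3 : Ca ≤ a := cnt_le s a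
  have h3' : Cb ≤ b := cnt_le s b
  have h4 : Cb ≤ Ca + (b - a) := by
    have := cnt_add_le s a (b - a)
    rwa [Nat.add_sub_cancel' hab] at this
  set C := Cb - Ca with hCdef
  set D := (b - Cb) - (a - Ca) with hDdef
  have hCcast : (C : ℤ) = (Cb : ℤ) - (Ca : ℤ) := by omega
  have hDcast : (D : ℤ) = ((b : ℤ) - Cb) - ((a : ℤ) - Ca) := by omega
  have hqC : (q : ℤ) * (C : ℤ) = (p : ℤ) * (D : ℤ) := by
    rw [hCcast, hDcast]
    unfold S at h
    linear_combination -h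
  have hN : q * C = p * D := by exact_mod_cast hqC
  have pdvd : p ∣ C := hpq.dvd_of_dvd_mul_left ⟨D, hN⟩
  have hsum : b - a = C + D := by omega
  by_cases hC0 : C = 0
  · have hD0 : D = 0 := by
      rw [hC0, Nat.mul_zero] at hN
      exact (Nat.mul_eq_zero.1 hN.symm).resolve_left (by omega)
    omega
  · have hCp : C = p := le_antisymm (by omega) (Nat.le_of_dvd (Nat.pos_of_ne_zero hC0) pdvd)
    have hDq : D = q := by
      rw [hCp, Nat.mul_comm] at hN
      exact (Nat.eq_of_mul_eq_mul_left hp hN).symm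
    omega

lemma S_inj_mod (hn : n = p + q) (hp : 0 < p) (hq : 0 < q) (hpq : Nat.Coprime p q)
    {s : Fin n → Bool} (hb : cnt s n = p) {a b : ℕ}
    (h : S p q s a = S p q s b) : a % n = b % n := by
  rw [S_mod hn s hb a, S_mod hn s hb b] at h
  have ha : a % n < n := Nat.mod_lt _ npos
  have hbn : b % n < n := Nat.mod_lt _ npos
  rcases le_total (a % n) (b % n) with hle | hle
  · exact S_inj_le hn hp hq hpq hb hle ha hbn h
  · exact (S_inj_le hn hp hq hpq hb hle hbn ha h.symm).symm

lemma exists_min (hn : n = p + q) {s : Fin n → Bool} (hb : cnt s n = p) :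
    ∃ a, a < n ∧ ∀ k, S p q s a ≤ S p q s k := by
  obtain ⟨a, haR, hmin⟩ := Finset.exists_min_image (Finset.range n) (S p q s)
    ⟨0, Finset.mem_range.2 npos⟩
  refine ⟨a, Finset.mem_range.1 haR, fun k => ?_⟩
  rw [S_mod hn s hb k]
  exact hmin _ (Finset.mem_range.2 (Nat.mod_lt _ npos))

/-- the Dyck condition: all weighted partial sums are nonnegative. -/
def Good (p q : ℕ) (s : Fin n → Bool) : Prop := ∀ k, 0 ≤ S p q s k

lemma min_of_good (hn : n = p + q) {t : Fin n → Bool} (hbt : cnt t n = p)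
    {a : ℕ} (ha : a ≤ n) (hg : Good p q (rot a t)) (j : ℕ) :
    S p q t a ≤ S p q t j := by
  have h1 : S p q t j = S p q t (j % n + n) := by
    rw [S_add_n hn t hbt, ← S_mod hn t hbt]
  have h2 : a ≤ j % n + n := by omega
  have h3 := hg (j % n + n - a)
  rw [S_rot, Nat.add_sub_cancel' h2] at h3
  omega

lemma mod_inj_Icc {a b : ℕ} (ha1 : 1 ≤ a) (ha2 : a ≤ n) (hb1 : 1 ≤ b) (hb2 : b ≤ n)
    (h : a % n = b % n) : a = b := by
  rcases eq_or_lt_of_le ha2 with rfl | ha3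
  · rcases eq_or_lt_of_le hb2 with rfl | hb3
    · rfl
    · rw [Nat.mod_self, Nat.mod_eq_of_lt hb3] at h; omega
  · rcases eq_or_lt_of_le hb2 with rfl | hb3
    · rw [Nat.mod_self, Nat.mod_eq_of_lt ha3] at h; omega
    · rw [Nat.mod_eq_of_lt ha3, Nat.mod_eq_of_lt hb3] at h; exact h

lemma card_mul (hn : n = p + q) (hp : 0 < p) (hq : 0 < q) (hpq : Nat.Coprime p q) :
    Nat.card {s : Fin n → Bool // cnt s n = p ∧ Good p q s} * n
      = Nat.card {s : Fin n → Bool // cnt s n = p} := by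
  have hnpos : 0 < n := npos
  set F : {s : Fin n → Bool // cnt s n = p ∧ Good p q s} × Fin n →
      {s : Fin n → Bool // cnt s n = p} :=
    fun x => ⟨rot x.2.val x.1.val, bal_rot hn x.1.2.1 x.2.val⟩ with hF
  have hbij : Function.Bijective F := by
    constructor
    · rintro ⟨⟨g, hbg, hgg⟩, m⟩ ⟨⟨g', hbg', hgg'⟩, m'⟩ hxy
      have heq : rot m.val g = rot m'.val g' := congrArg Subtype.val hxy
      set t := rot m.val g with ht
      have hbt : cnt t n = p := bal_rot hn hbg m.val
      set a := n - m.val with hadef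
      set b := n - m'.val with hbdef
      have hm : m.val < n := m.isLt
      have hm' : m'.val < n := m'.isLt
      have hg1 : rot a t = g := by
        rw [ht, rot_rot, show a + m.val = n by omega, rot_n]
      have hg2 : rot b t = g' := by
        rw [heq, rot_rot, show b + m'.val = n by omega, rot_n]
      have hmin1 := min_of_good hn hbt (show a ≤ n by omega) (hg1 ▸ hgg)
      have hmin2 := min_of_good hn hbt (show b ≤ n by omega) (hg2 ▸ hgg')
      have hS : S p q t a = S p q t b := le_antisymm (hmin1 b) (hmin2 a)
      have hab : a = b :=
        mod_inj_Icc (by omega) (by omega) (by omega) (by omega)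
          (S_inj_mod hn hp hq hpq hbt hS)
      have hmm : m = m' := Fin.ext (by omega)
      have hgg2 : g = g' := by rw [← hg1, ← hg2, hab]
      subst hmm
      simp only [Prod.mk.injEq, Subtype.mk.injEq]
      exact ⟨hgg2, trivial⟩
    · rintro ⟨t, hbt⟩
      obtain ⟨a, han, hmin⟩ := exists_min hn hbt
      have hgood : Good p q (rot a t) := by
        intro k
        rw [S_rot]
        have := hmin (a + k)
        omega
      refine ⟨⟨⟨rot a t, bal_rot hn hbt a, hgood⟩, ⟨(n - a) % n, Nat.mod_lt _ hnpos⟩⟩, ?_⟩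
      apply Subtype.ext
      show rot ((n - a) % n) (rot a t) = t
      rw [rot_mod, rot_rot, show n - a + a = n by omega, rot_n]
  calc Nat.card {s : Fin n → Bool // cnt s n = p ∧ Good p q s} * n
      = Nat.card ({s : Fin n → Bool // cnt s n = p ∧ Good p q s} × Fin n) := by
        rw [Nat.card_prod]
        congr 1
        rw [Nat.card_eq_fintype_card, Fintype.card_fin]
    _ = Nat.card {s : Fin n → Bool // cnt s n = p} := Nat.card_eq_of_bijective F hbij

lemma cnt_univ (s : Fin n → Bool) :
    cnt s n = (Finset.univ.filter (fun i => s i = true)).card := by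
  rw [cnt, Finset.card_filter, Finset.card_filter,
    ← Fin.sum_univ_eq_sum_range (fun i => if sh s i = true then 1 else 0) n]
  apply Finset.sum_congr rfl
  intro i _
  rw [sh_fin]

lemma card_bal : Nat.card {s : Fin n → Bool // cnt s n = p} = n.choose p := by
  have e : {s : Fin n → Bool // cnt s n = p} ≃ {t : Finset (Fin n) // t.card = p} :=
    { toFun := fun x => ⟨Finset.univ.filter (fun i => x.val i = true),
        by rw [← cnt_univ]; exact x.2⟩
      invFun := fun x => ⟨fun i => decide (i ∈ x.val),
        by rw [cnt_univ]; convert x.2 using 2; ext i; simp⟩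
      left_inv := by
        rintro ⟨s, hs⟩
        apply Subtype.ext
        funext i
        simp
      right_inv := by
        rintro ⟨t, ht⟩
        apply Subtype.ext
        ext i
        simp }
  rw [Nat.card_congr e, Nat.card_eq_fintype_card, Fintype.card_finset_len,
    Fintype.card_fin]

end pq

section path

variable (p q : ℕ) [NeZero (p + q)]

/-- the lattice path associated with a step sequence. -/
def Psi (s : Fin (p + q) → Bool) : Fin (p + q + 1) → ℤ × ℤ :=
  fun k => ((cnt s k.val : ℤ), (k.val : ℤ) - (cnt s k.val : ℤ))

lemma psi_inj : Function.Injective (Psi p q) := by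
  intro s s' h
  have hcnt : ∀ j, j ≤ p + q → cnt s j = cnt s' j := by
    intro j hj
    have := congrFun h ⟨j, by omega⟩
    have h1 : (cnt s j : ℤ) = (cnt s' j : ℤ) := congrArg Prod.fst this
    exact_mod_cast h1
  funext i
  have h1 : cnt s i.val = cnt s' i.val := hcnt i.val (by omega)
  have h2 : cnt s (i.val + 1) = cnt s' (i.val + 1) := hcnt _ (by omega)
  rw [cnt_succ, cnt_succ, sh_fin, sh_fin, h1] at h2
  cases hs : s i <;> cases hs' : s' i <;> simp [hs, hs'] at h2 ⊢

lemma psi_image (hp : 0 < p) (hq : 0 < q) :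
    {f : Fin (p + q + 1) → ℤ × ℤ |
        IsLatticePath (p + q) f ∧ f (Fin.last (p + q)) = ((p : ℤ), (q : ℤ)) ∧
        ∀ i, (p : ℤ) * (f i).2 ≤ (q : ℤ) * (f i).1}
      = Psi p q '' {s | cnt s (p + q) = p ∧ Good p q s} := by
  apply Set.eq_of_subset_of_subset
  · rintro f ⟨⟨hf0, hfstep⟩, hflast, hfdyck⟩
    set s : Fin (p + q) → Bool :=
      fun i => decide (f i.succ = f i.castSucc + (1, 0)) with hsdef
    have key : ∀ j (hj : j < p + q + 1), f ⟨j, hj⟩ = ((cnt s j : ℤ), (j : ℤ) - (cnt s j : ℤ)) := by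
      intro j
      induction j with
      | zero =>
        intro hj
        have : (⟨0, hj⟩ : Fin (p + q + 1)) = 0 := rfl
        rw [this, hf0, cnt_zero]
        norm_num
      | succ j ih =>
        intro hj
        have hjn : j < p + q := by omega
        set i : Fin (p + q) := ⟨j, hjn⟩ with hidef
        have hic : i.castSucc = ⟨j, by omega⟩ := rfl
        have his : i.succ = ⟨j + 1, hj⟩ := rfl
        have hprev := ih (by omega)
        have hshj : sh s j = s i := by
          rw [← sh_fin s i]
        rcases hfstep i with hstep | hstep
        · have hsi : s i = true := by
            rw [hsdef]; exact decide_eq_true hstep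
          rw [← his, hstep, hic, hprev, cnt_succ, hshj, hsi]
          simp only [if_true]
          apply Prod.ext <;> push_cast <;> simp <;> ring
        · have hsi : s i = false := by
            rw [hsdef]
            apply decide_eq_false
            intro hcon
            rw [hstep] at hcon
            have h2 := add_left_cancel hcon
            simp [Prod.ext_iff] at h2
          rw [← his, hstep, hic, hprev, cnt_succ, hshj, hsi]
          simp only [Bool.false_eq_true, if_false]
          apply Prod.ext <;> push_cast <;> simp <;> ring
    have hbal : cnt s (p + q) = p := by
      have := key (p + q) (by omega)
      have hlast : Fin.last (p + q) = ⟨p + q, by omega⟩ := rfl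
      rw [hlast, this] at hflast
      have h1 : (cnt s (p + q) : ℤ) = (p : ℤ) := congrArg Prod.fst hflast
      exact_mod_cast h1
    have hgood : Good p q s := by
      intro k
      rw [S_mod rfl s hbal k]
      have hk : k % (p + q) < p + q := Nat.mod_lt _ (by omega)
      have hdk := hfdyck ⟨k % (p + q), by omega⟩
      rw [key (k % (p + q)) (by omega)] at hdk
      simp only at hdk
      unfold S
      linarith
    refine ⟨s, ⟨hbal, hgood⟩, ?_⟩
    funext k
    rw [Psi, show k = ⟨k.val, k.isLt⟩ from rfl, key k.val k.isLt]
  · rintro f ⟨s, ⟨hbal, hgood⟩, rfl⟩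
    refine ⟨⟨?_, ?_⟩, ?_, ?_⟩
    · show Psi p q s 0 = (0, 0)
      rw [Psi]
      show ((cnt s 0 : ℤ), ((0 : ℕ) : ℤ) - (cnt s 0 : ℤ)) = (0, 0)
      rw [cnt_zero]
      norm_num
    · intro i
      have hic : i.castSucc.val = i.val := rfl
      have his : i.succ.val = i.val + 1 := rfl
      have hcs : cnt s (i.val + 1) = cnt s i.val + (if s i then 1 else 0) := by
        rw [cnt_succ, sh_fin]
      cases hsi : s i with
      | true =>
        left
        rw [hsi] at hcs
        simp only [Psi, his, hic, hcs, Prod.mk_add_mk, Prod.mk.injEq]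
        constructor <;> push_cast <;> ring
      | false =>
        right
        rw [hsi] at hcs
        simp only [Psi, his, hic, hcs, Prod.mk_add_mk, Prod.mk.injEq]
        constructor <;> push_cast <;> ring
    · rw [Psi]
      have hlv : (Fin.last (p + q)).val = p + q := rfl
      simp only [hlv, hbal]
      have : ((p : ℤ) + q) - p = q := by ring
      rw [Prod.mk.injEq]
      exact ⟨rfl, by push_cast; ring⟩
    · intro i
      have := hgood i.val
      unfold S at this
      simp only [Psi]
      linarith

end path
end DPaux

/-- for coprime `p, q`, the number of `(p,q)`-Dyck paths, i.e. lattice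
paths from `(0,0)` to `(p,q)` all of whose points `(x,y)` satisfy `p·y ≤ q·x`,
equals `(1/(p+q))·(p+q choose p)`. -/
theorem count_dyck_paths_coprime (p q : ℕ) (hp : 0 < p) (hq : 0 < q)
    (hpq : Nat.Coprime p q) :
    {f : Fin (p + q + 1) → ℤ × ℤ |
        IsLatticePath (p + q) f ∧ f (Fin.last (p + q)) = ((p : ℤ), (q : ℤ)) ∧
        ∀ i, (p : ℤ) * (f i).2 ≤ (q : ℤ) * (f i).1}.ncard
      = (p + q).choose p / (p + q) := by
  haveI : NeZero (p + q) := ⟨by omega⟩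
  rw [DPaux.psi_image p q hp hq,
    Set.ncard_image_of_injective _ (DPaux.psi_inj p q), ← Nat.card_coe_set_eq]
  have h1 := DPaux.card_mul (n := p + q) rfl hp hq hpq
  rw [DPaux.card_bal] at h1
  have h2 : Nat.card {s : Fin (p + q) → Bool | DPaux.cnt s (p + q) = p ∧ DPaux.Good p q s}
      = Nat.card {s : Fin (p + q) → Bool // DPaux.cnt s (p + q) = p ∧ DPaux.Good p q s} := rfl
  rw [h2, ← h1, Nat.mul_div_cancel _ (by omega)]
end
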